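/- A connected finite graph admitting a half-edge labeling from {U, D, L, R} satisfying the grid constraints, with at least one node lacking a D-label and at least one node lacking an L-label, is isomorphic to an h × w grid graph for some h, w, i.e., its nodes can be assigned coordinates (x,y) with 0 ≤ x < w, 0 ≤ y < h such that edges join exactly the pairs differing by 1 in exactly one coordinate. -/

import Mathlib

/-!
Each label `a` gives a partial step map `step a`: follow the `a`-labeled edge, or stay put if there
is none. Constraints (e) and (f) say that a step does not change which perpendicular labels are
present, and together with the square (d) they make perpendicular steps commute everywhere.
Let `coord a u` be the number of `a`-steps from `u` to a node without an `a`-edge. By commutation,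
these walks terminate everywhere as soon as they terminate at one node; each step changes `coord L`
or `coord D` by `±1` and fixes the other. Walking left and then down from a node ends at a corner
which is invariant under all steps, hence the same for every node, and retracing the walk recovers
the node: so `u ↦ (coord L u, coord D u)` is injective. Since `coord L + coord R` and
`coord D + coord U` are constant, its image is a full rectangle. In a finite graph a node maximizing
`coord L` has no `R`-edge, so the `R`- and `U`-walks terminate as well.
-/

inductive GridLabel | U | D | L | R
deriving DecidableEq

/-- Node `u` has an incident half-edge labeled `a`. -/
def HasLab {V : Type*} (G : SimpleGraph V) (lab : V → V → GridLabel)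
    (u : V) (a : GridLabel) : Prop :=
  ∃ v, G.Adj u v ∧ lab u v = a

/-- Adjacency in an `w × h` grid: coordinates differ by `1` in exactly one coordinate. -/
def GridAdj {w h : ℕ} (p q : Fin w × Fin h) : Prop :=
  ((p.1 : ℕ) + 1 = q.1 ∧ p.2 = q.2) ∨ ((q.1 : ℕ) + 1 = p.1 ∧ p.2 = q.2) ∨
  ((p.2 : ℕ) + 1 = q.2 ∧ p.1 = q.1) ∨ ((q.2 : ℕ) + 1 = p.2 ∧ p.1 = q.1)

open GridLabel

namespace GridLabel

def opp : GridLabel → GridLabel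
  | U => D
  | D => U
  | L => R
  | R => L

@[simp] theorem opp_opp (a : GridLabel) : a.opp.opp = a := by
  cases a <;> rfl

def Perp (a b : GridLabel) : Prop := b ≠ a ∧ b ≠ a.opp

instance : DecidableRel Perp := fun _ _ => instDecidableAnd

variable {a b : GridLabel}

theorem Perp.symm : Perp a b → Perp b a := by
  cases a <;> cases b <;> decide

theorem Perp.opp_left : Perp a b → Perp a.opp b := by
  cases a <;> cases b <;> decide

theorem Perp.opp_right (h : Perp a b) : Perp a b.opp :=
  h.symm.opp_left.symm

theorem eq_or_eq_opp_or_perp (a b : GridLabel) : b = a ∨ b = a.opp ∨ Perp a b := by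
  cases a <;> cases b <;> decide

theorem Perp.eq_or_eq_opp (h : Perp a b) (c : GridLabel) :
    c = a ∨ c = a.opp ∨ c = b ∨ c = b.opp := by
  cases a <;> cases b <;> cases c <;> revert h <;> decide

end GridLabel

structure GridLabeling {V : Type*} (G : SimpleGraph V) where
  lab : V → V → GridLabel
  lab_ne : ∀ u v w, G.Adj u v → G.Adj u w → v ≠ w → lab u v ≠ lab u w
  lab_eq_L_iff : ∀ u v, G.Adj u v → (lab u v = L ↔ lab v u = R)
  lab_eq_U_iff : ∀ u v, G.Adj u v → (lab u v = U ↔ lab v u = D)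
  square : ∀ u, HasLab G lab u R → HasLab G lab u U →
    ∃ a b c, G.Adj u a ∧ lab u a = R ∧ G.Adj a b ∧ lab a b = U ∧
      G.Adj b c ∧ lab b c = L ∧ G.Adj c u ∧ lab c u = D
  hasLab_iff_of_lab_eq_R : ∀ u v, G.Adj u v → lab u v = R →
    ((HasLab G lab u D ↔ HasLab G lab v D) ∧ (HasLab G lab u U ↔ HasLab G lab v U))
  hasLab_iff_of_lab_eq_U : ∀ u v, G.Adj u v → lab u v = U →
    ((HasLab G lab u L ↔ HasLab G lab v L) ∧ (HasLab G lab u R ↔ HasLab G lab v R))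

namespace GridLabeling

variable {V : Type*} {G : SimpleGraph V} (ℓ : GridLabeling G) {a b : GridLabel} {u v : V}

theorem lab_swap (h : G.Adj u v) : ℓ.lab v u = (ℓ.lab u v).opp := by
  have hL := ℓ.lab_eq_L_iff u v h
  have hR := ℓ.lab_eq_L_iff v u h.symm
  have hU := ℓ.lab_eq_U_iff u v h
  have hD := ℓ.lab_eq_U_iff v u h.symm
  cases huv : ℓ.lab u v <;> cases hvu : ℓ.lab v u <;> simp_all [opp]

open Classical in
noncomputable def step (a : GridLabel) (u : V) : V :=
  if h : HasLab G ℓ.lab u a then h.choose else u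

theorem adj_step (h : HasLab G ℓ.lab u a) : G.Adj u (ℓ.step a u) := by
  rw [step, dif_pos h]
  exact h.choose_spec.1

theorem lab_step (h : HasLab G ℓ.lab u a) : ℓ.lab u (ℓ.step a u) = a := by
  rw [step, dif_pos h]
  exact h.choose_spec.2

theorem step_of_not_hasLab (h : ¬HasLab G ℓ.lab u a) : ℓ.step a u = u :=
  dif_neg h

theorem step_lab (h : G.Adj u v) : ℓ.step (ℓ.lab u v) u = v := by
  have hu : HasLab G ℓ.lab u (ℓ.lab u v) := ⟨v, h, rfl⟩
  by_contra hne
  exact ℓ.lab_ne u _ v (ℓ.adj_step hu) h hne (ℓ.lab_step hu)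

theorem step_opp_of_adj (h : G.Adj u v) : ℓ.step (ℓ.lab u v).opp v = u := by
  rw [← ℓ.lab_swap h]
  exact ℓ.step_lab h.symm

theorem hasLab_opp_step (h : HasLab G ℓ.lab u a) : HasLab G ℓ.lab (ℓ.step a u) a.opp :=
  ⟨u, (ℓ.adj_step h).symm, by rw [ℓ.lab_swap (ℓ.adj_step h), ℓ.lab_step h]⟩

theorem step_opp_step (h : HasLab G ℓ.lab u a) : ℓ.step a.opp (ℓ.step a u) = u := by
  simpa only [ℓ.lab_step h] using ℓ.step_opp_of_adj (ℓ.adj_step h)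

theorem step_step_opp (h : HasLab G ℓ.lab u a.opp) : ℓ.step a (ℓ.step a.opp u) = u := by
  simpa only [opp_opp] using ℓ.step_opp_step h

theorem hasLab_iff_of_adj (hab : Perp a b) (h : G.Adj u v) (hl : ℓ.lab u v = b) :
    HasLab G ℓ.lab v a ↔ HasLab G ℓ.lab u a := by
  have hl' : ℓ.lab v u = b.opp := by rw [ℓ.lab_swap h, hl]
  cases b <;> cases a <;>
    first
    | exact absurd hab (by decide)
    | exact (ℓ.hasLab_iff_of_lab_eq_U u v h hl).1.symm
    | exact (ℓ.hasLab_iff_of_lab_eq_U u v h hl).2.symm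
    | exact (ℓ.hasLab_iff_of_lab_eq_U v u h.symm hl').1
    | exact (ℓ.hasLab_iff_of_lab_eq_U v u h.symm hl').2
    | exact (ℓ.hasLab_iff_of_lab_eq_R u v h hl).1.symm
    | exact (ℓ.hasLab_iff_of_lab_eq_R u v h hl).2.symm
    | exact (ℓ.hasLab_iff_of_lab_eq_R v u h.symm hl').1
    | exact (ℓ.hasLab_iff_of_lab_eq_R v u h.symm hl').2

theorem hasLab_step_iff (hab : Perp a b) :
    HasLab G ℓ.lab (ℓ.step b u) a ↔ HasLab G ℓ.lab u a := by
  by_cases hb : HasLab G ℓ.lab u b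
  · exact ℓ.hasLab_iff_of_adj hab (ℓ.adj_step hb) (ℓ.lab_step hb)
  · rw [ℓ.step_of_not_hasLab hb]

theorem step_comm_of_not_hasLab (hab : Perp a b) (h : ¬HasLab G ℓ.lab u a) :
    ℓ.step a (ℓ.step b u) = ℓ.step b (ℓ.step a u) := by
  rw [ℓ.step_of_not_hasLab h, ℓ.step_of_not_hasLab (mt (ℓ.hasLab_step_iff hab).1 h)]

theorem commute_step_R_U : Function.Commute (ℓ.step R) (ℓ.step U) := by
  intro u
  by_cases hR : HasLab G ℓ.lab u R
  · by_cases hU : HasLab G ℓ.lab u U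
    · obtain ⟨x, y, z, hux, hux', hxy, hxy', hyz, hyz', hzu, hzu'⟩ := ℓ.square u hR hU
      have hz : ℓ.step U u = z := by simpa only [hzu', opp] using ℓ.step_opp_of_adj hzu
      have hy : ℓ.step R z = y := by simpa only [hyz', opp] using ℓ.step_opp_of_adj hyz
      rw [hz, hy, ← hux', ℓ.step_lab hux, ← hxy', ℓ.step_lab hxy]
    · exact (ℓ.step_comm_of_not_hasLab (by decide) hU).symm
  · exact ℓ.step_comm_of_not_hasLab (by decide) hR

theorem commute_step_opp_left (hab : Perp a b) (h : Function.Commute (ℓ.step a) (ℓ.step b)) :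
    Function.Commute (ℓ.step a.opp) (ℓ.step b) := by
  intro u
  by_cases hu : HasLab G ℓ.lab u a.opp
  · set w := ℓ.step a.opp u
    have hbw : HasLab G ℓ.lab (ℓ.step b w) a :=
      (ℓ.hasLab_step_iff hab).2 (by simpa only [opp_opp] using ℓ.hasLab_opp_step hu)
    calc ℓ.step a.opp (ℓ.step b u) = ℓ.step a.opp (ℓ.step a (ℓ.step b w)) := by
          rw [h w, ℓ.step_step_opp hu]
      _ = ℓ.step b w := ℓ.step_opp_step hbw
  · exact ℓ.step_comm_of_not_hasLab hab.opp_left hu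

theorem commute_step (hab : Perp a b) : Function.Commute (ℓ.step a) (ℓ.step b) := by
  have hRU := ℓ.commute_step_R_U
  have hLU : Function.Commute (ℓ.step L) (ℓ.step U) := ℓ.commute_step_opp_left (by decide) hRU
  have hRD : Function.Commute (ℓ.step R) (ℓ.step D) :=
    (ℓ.commute_step_opp_left (by decide) hRU.symm).symm
  have hLD : Function.Commute (ℓ.step L) (ℓ.step D) :=
    (ℓ.commute_step_opp_left (by decide) hLU.symm).symm
  cases a <;> cases b <;>
    first
    | exact absurd hab (by decide)
    | exact hRU | exact hLU | exact hRD | exact hLD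
    | exact hRU.symm | exact hLU.symm | exact hRD.symm | exact hLD.symm

theorem forall_of_connected (hconn : G.Connected) {P : V → Prop}
    (hP : ∀ a u, P u → P (ℓ.step a u)) (hu : P u) (v : V) : P v := by
  induction (SimpleGraph.reachable_iff_reflTransGen u v).1 (hconn u v) with
  | refl => exact hu
  | tail _ hvw ih => exact ℓ.step_lab hvw ▸ hP _ _ ih

theorem apply_eq_apply_of_connected (hconn : G.Connected) {β : Type*} {F : V → β}
    (hF : ∀ a u, F (ℓ.step a u) = F u) (u v : V) : F u = F v :=
  ℓ.forall_of_connected hconn (P := fun w => F u = F w) (fun a w hw => hw.trans (hF a w).symm)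
    rfl v

theorem apply_step_opp_eq {β : Type*} {F : V → β} (hF : ∀ u, F (ℓ.step a u) = F u) (u : V) :
    F (ℓ.step a.opp u) = F u := by
  by_cases hu : HasLab G ℓ.lab u a.opp
  · rw [← hF, ℓ.step_step_opp hu]
  · rw [ℓ.step_of_not_hasLab hu]

def Terminates (a : GridLabel) (u : V) : Prop :=
  ∃ n, ¬HasLab G ℓ.lab ((ℓ.step a)^[n] u) a

theorem terminates_step (h : ℓ.Terminates a u) (b : GridLabel) : ℓ.Terminates a (ℓ.step b u) := by
  obtain ⟨n, hn⟩ := h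
  rcases eq_or_eq_opp_or_perp a b with rfl | rfl | hab
  · refine ⟨n, ?_⟩
    rwa [← Function.iterate_succ_apply, Function.iterate_succ_apply', ℓ.step_of_not_hasLab hn]
  · by_cases hu : HasLab G ℓ.lab u a.opp
    · exact ⟨n + 1, by rwa [Function.iterate_succ_apply, ℓ.step_step_opp hu]⟩
    · exact ⟨n, by rwa [ℓ.step_of_not_hasLab hu]⟩
  · refine ⟨n, ?_⟩
    rwa [(ℓ.commute_step hab).iterate_left n u, ℓ.hasLab_step_iff hab]

theorem terminates_of_connected (hconn : G.Connected) (h : ∃ u, ¬HasLab G ℓ.lab u a) (u : V) :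
    ℓ.Terminates a u := by
  obtain ⟨u₀, hu₀⟩ := h
  exact ℓ.forall_of_connected hconn (P := ℓ.Terminates a) (fun b _ hw => ℓ.terminates_step hw b)
    ⟨0, hu₀⟩ u

/-- Junk value `0` (`sInf ∅`) unless `ℓ.Terminates a u`. -/
noncomputable def coord (a : GridLabel) (u : V) : ℕ :=
  sInf {n | ¬HasLab G ℓ.lab ((ℓ.step a)^[n] u) a}

theorem coord_le {n : ℕ} (h : ¬HasLab G ℓ.lab ((ℓ.step a)^[n] u) a) : ℓ.coord a u ≤ n :=
  Nat.sInf_le h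

theorem coord_iterate {k : ℕ} (hk : k ≤ ℓ.coord a u) :
    ℓ.coord a ((ℓ.step a)^[k] u) + k = ℓ.coord a u := by
  simpa only [coord, Function.iterate_add_apply] using
    Nat.sInf_add (p := fun n => ¬HasLab G ℓ.lab ((ℓ.step a)^[n] u) a) hk

theorem hasLab_of_coord_pos (h : 0 < ℓ.coord a u) : HasLab G ℓ.lab u a := by
  by_contra hu
  exact h.ne' (Nat.le_zero.1 (ℓ.coord_le (n := 0) hu))

theorem coord_pos_iff (hT : ℓ.Terminates a u) : 0 < ℓ.coord a u ↔ HasLab G ℓ.lab u a := by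
  refine ⟨ℓ.hasLab_of_coord_pos, fun h => Nat.pos_of_ne_zero fun h0 => ?_⟩
  have : ¬HasLab G ℓ.lab ((ℓ.step a)^[ℓ.coord a u] u) a := Nat.sInf_mem hT
  rw [h0] at this
  exact this h

theorem coord_step (hT : ℓ.Terminates a u) (h : HasLab G ℓ.lab u a) :
    ℓ.coord a (ℓ.step a u) + 1 = ℓ.coord a u :=
  ℓ.coord_iterate (k := 1) ((ℓ.coord_pos_iff hT).2 h)

theorem coord_step_opp (hT : ℓ.Terminates a (ℓ.step a.opp u)) (h : HasLab G ℓ.lab u a.opp) :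
    ℓ.coord a (ℓ.step a.opp u) = ℓ.coord a u + 1 := by
  have := ℓ.coord_step hT (by simpa only [opp_opp] using ℓ.hasLab_opp_step h)
  rw [ℓ.step_step_opp h] at this
  omega

theorem coord_step_of_perp (hab : Perp a b) (u : V) : ℓ.coord a (ℓ.step b u) = ℓ.coord a u := by
  simp only [coord, (ℓ.commute_step hab).iterate_left _ u, ℓ.hasLab_step_iff hab]

theorem coord_iterate_of_perp (hab : Perp a b) (k : ℕ) (u : V) :
    ℓ.coord a ((ℓ.step b)^[k] u) = ℓ.coord a u :=
  congrFun (Function.iterate_invariant (g := ℓ.coord a) (f := ℓ.step b)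
    (funext (ℓ.coord_step_of_perp hab)) k) u

theorem iterate_opp_iterate {k : ℕ} (hk : k ≤ ℓ.coord a u) :
    (ℓ.step a.opp)^[k] ((ℓ.step a)^[k] u) = u := by
  induction k generalizing u with
  | zero => rfl
  | succ k ih =>
    have hu : HasLab G ℓ.lab u a := ℓ.hasLab_of_coord_pos (by omega)
    have hstep : ℓ.coord a (ℓ.step a u) + 1 = ℓ.coord a u := ℓ.coord_iterate (k := 1) (by omega)
    rw [Function.iterate_succ_apply (ℓ.step a), Function.iterate_succ_apply' (ℓ.step a.opp),
      ih (u := ℓ.step a u) (by omega), ℓ.step_opp_step hu]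

theorem terminates_opp [Finite V] (hconn : G.Connected) (hT : ∀ u, ℓ.Terminates a u) (u : V) :
    ℓ.Terminates a.opp u := by
  have := hconn.nonempty
  obtain ⟨m, hm⟩ := Finite.exists_max (ℓ.coord a)
  refine ℓ.terminates_of_connected hconn ⟨m, fun h => ?_⟩ u
  have := ℓ.coord_step_opp (hT _) h
  have := hm (ℓ.step a.opp m)
  omega

theorem coord_add_coord_opp_step (hT : ∀ a u, ℓ.Terminates a u) (a b : GridLabel) (u : V) :
    ℓ.coord a (ℓ.step b u) + ℓ.coord a.opp (ℓ.step b u) = ℓ.coord a u + ℓ.coord a.opp u := by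
  have hself (a : GridLabel) (u : V) :
      ℓ.coord a (ℓ.step a u) + ℓ.coord a.opp (ℓ.step a u) = ℓ.coord a u + ℓ.coord a.opp u := by
    by_cases hu : HasLab G ℓ.lab u a
    · have h₁ := ℓ.coord_step (hT _ _) hu
      have h₂ := ℓ.coord_step_opp (a := a.opp) (hT _ _) (by rwa [opp_opp])
      simp only [opp_opp] at h₂
      omega
    · rw [ℓ.step_of_not_hasLab hu]
  rcases eq_or_eq_opp_or_perp a b with rfl | rfl | hab
  · exact hself _ u
  · have := hself a.opp u
    simp only [opp_opp] at this
    omega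
  · rw [ℓ.coord_step_of_perp hab, ℓ.coord_step_of_perp hab.opp_left]

theorem coord_add_coord_opp (hconn : G.Connected) (hT : ∀ a u, ℓ.Terminates a u)
    (a : GridLabel) (u v : V) :
    ℓ.coord a u + ℓ.coord a.opp u = ℓ.coord a v + ℓ.coord a.opp v :=
  ℓ.apply_eq_apply_of_connected hconn (F := fun w => ℓ.coord a w + ℓ.coord a.opp w)
    (ℓ.coord_add_coord_opp_step hT a) u v

theorem coord_iterate_opp (hconn : G.Connected) (hT : ∀ a u, ℓ.Terminates a u) {k : ℕ}
    (hk : k ≤ ℓ.coord a.opp u) : ℓ.coord a ((ℓ.step a.opp)^[k] u) = ℓ.coord a u + k := by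
  have h₁ := ℓ.coord_iterate hk
  have h₂ := ℓ.coord_add_coord_opp hconn hT a ((ℓ.step a.opp)^[k] u) u
  omega

noncomputable def proj (a : GridLabel) (u : V) : V :=
  (ℓ.step a)^[ℓ.coord a u] u

theorem proj_step_self (hT : ∀ a u, ℓ.Terminates a u) (a : GridLabel) (u : V) :
    ℓ.proj a (ℓ.step a u) = ℓ.proj a u := by
  by_cases hu : HasLab G ℓ.lab u a
  · rw [proj, proj, ← ℓ.coord_step (hT _ _) hu, Function.iterate_succ_apply]
  · rw [ℓ.step_of_not_hasLab hu]

theorem proj_step_of_perp (hab : Perp a b) (u : V) :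
    ℓ.proj a (ℓ.step b u) = ℓ.step b (ℓ.proj a u) := by
  rw [proj, proj, ℓ.coord_step_of_perp hab]
  exact (ℓ.commute_step hab).iterate_left _ u

theorem coord_proj (a : GridLabel) (u : V) : ℓ.coord a (ℓ.proj a u) = 0 := by
  have := ℓ.coord_iterate (le_refl (ℓ.coord a u))
  rw [← proj] at this
  omega

theorem coord_proj_of_perp (hab : Perp a b) (u : V) : ℓ.coord b (ℓ.proj a u) = ℓ.coord b u :=
  ℓ.coord_iterate_of_perp hab.symm _ u

theorem iterate_opp_proj (a : GridLabel) (u : V) :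
    (ℓ.step a.opp)^[ℓ.coord a u] (ℓ.proj a u) = u :=
  ℓ.iterate_opp_iterate le_rfl

noncomputable def corner (a b : GridLabel) (u : V) : V :=
  ℓ.proj b (ℓ.proj a u)

theorem corner_step (hT : ∀ a u, ℓ.Terminates a u) (hab : Perp a b) (c : GridLabel) (u : V) :
    ℓ.corner a b (ℓ.step c u) = ℓ.corner a b u := by
  have ha (u : V) : ℓ.corner a b (ℓ.step a u) = ℓ.corner a b u := by
    rw [corner, corner, ℓ.proj_step_self hT]
  have hb (u : V) : ℓ.corner a b (ℓ.step b u) = ℓ.corner a b u := by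
    rw [corner, corner, ℓ.proj_step_of_perp hab, ℓ.proj_step_self hT]
  rcases hab.eq_or_eq_opp c with rfl | rfl | rfl | rfl
  exacts [ha u, ℓ.apply_step_opp_eq ha u, hb u, ℓ.apply_step_opp_eq hb u]

theorem coord_corner_left (hab : Perp a b) (u : V) : ℓ.coord a (ℓ.corner a b u) = 0 := by
  rw [corner, ℓ.coord_proj_of_perp hab.symm, ℓ.coord_proj]

theorem coord_corner_right (u : V) : ℓ.coord b (ℓ.corner a b u) = 0 :=
  ℓ.coord_proj b _

theorem iterate_corner (hab : Perp a b) (u : V) :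
    (ℓ.step a.opp)^[ℓ.coord a u] ((ℓ.step b.opp)^[ℓ.coord b u] (ℓ.corner a b u)) = u := by
  rw [corner, ← ℓ.coord_proj_of_perp hab, ℓ.iterate_opp_proj, ℓ.iterate_opp_proj]

theorem eq_of_coord_eq (hconn : G.Connected) (hT : ∀ a u, ℓ.Terminates a u) (hab : Perp a b)
    (ha : ℓ.coord a u = ℓ.coord a v) (hb : ℓ.coord b u = ℓ.coord b v) : u = v := by
  have hcorner : ℓ.corner a b u = ℓ.corner a b v :=
    ℓ.apply_eq_apply_of_connected hconn (ℓ.corner_step hT hab) u v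
  rw [← ℓ.iterate_corner hab u, ← ℓ.iterate_corner hab v, ha, hb, hcorner]

theorem exists_coord_eq (hconn : G.Connected) (hT : ∀ a u, ℓ.Terminates a u) (hab : Perp a b)
    {i j : ℕ} (u : V) (hi : i ≤ ℓ.coord a u + ℓ.coord a.opp u)
    (hj : j ≤ ℓ.coord b u + ℓ.coord b.opp u) : ∃ v, ℓ.coord a v = i ∧ ℓ.coord b v = j := by
  have hca := ℓ.coord_corner_left hab u
  have hcb := ℓ.coord_corner_right (a := a) (b := b) u
  set w := (ℓ.step b.opp)^[j] (ℓ.corner a b u)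
  have hwa : ℓ.coord a w = 0 := by rw [ℓ.coord_iterate_of_perp hab.opp_right, hca]
  have hwb : ℓ.coord b w = j := by
    have := ℓ.coord_add_coord_opp hconn hT b (ℓ.corner a b u) u
    rw [ℓ.coord_iterate_opp hconn hT (by omega), hcb, zero_add]
  refine ⟨(ℓ.step a.opp)^[i] w, ?_, ?_⟩
  · have := ℓ.coord_add_coord_opp hconn hT a w u
    rw [ℓ.coord_iterate_opp hconn hT (by omega), hwa, zero_add]
  · rw [ℓ.coord_iterate_of_perp hab.symm.opp_right, hwb]

theorem adj_of_coord_succ (hconn : G.Connected) (hT : ∀ a u, ℓ.Terminates a u) (hab : Perp a b)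
    (ha : ℓ.coord a u + 1 = ℓ.coord a v) (hb : ℓ.coord b u = ℓ.coord b v) : G.Adj u v := by
  have := ℓ.coord_add_coord_opp hconn hT a u v
  have hu : HasLab G ℓ.lab u a.opp := (ℓ.coord_pos_iff (hT _ _)).1 (by omega)
  have hv : ℓ.step a.opp u = v := ℓ.eq_of_coord_eq hconn hT hab
    (by rw [ℓ.coord_step_opp (hT _ _) hu, ha])
    (by rw [ℓ.coord_step_of_perp hab.symm.opp_right, hb])
  exact hv ▸ ℓ.adj_step hu

theorem adj_iff (hconn : G.Connected) (hT : ∀ a u, ℓ.Terminates a u) (hab : Perp a b) :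
    G.Adj u v ↔
      (ℓ.coord a u + 1 = ℓ.coord a v ∧ ℓ.coord b u = ℓ.coord b v) ∨
      (ℓ.coord a v + 1 = ℓ.coord a u ∧ ℓ.coord b u = ℓ.coord b v) ∨
      (ℓ.coord b u + 1 = ℓ.coord b v ∧ ℓ.coord a u = ℓ.coord a v) ∨
      (ℓ.coord b v + 1 = ℓ.coord b u ∧ ℓ.coord a u = ℓ.coord a v) := by
  constructor
  · intro h
    have hu : HasLab G ℓ.lab u (ℓ.lab u v) := ⟨v, h, rfl⟩
    have hv := ℓ.step_lab h
    rcases hab.eq_or_eq_opp (ℓ.lab u v) with hl | hl | hl | hl <;> rw [hl] at hu hv <;> subst hv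
    · exact Or.inr (Or.inl ⟨ℓ.coord_step (hT _ _) hu, (ℓ.coord_step_of_perp hab.symm u).symm⟩)
    · exact Or.inl ⟨(ℓ.coord_step_opp (hT _ _) hu).symm,
        (ℓ.coord_step_of_perp hab.symm.opp_right u).symm⟩
    · exact Or.inr (Or.inr (Or.inr ⟨ℓ.coord_step (hT _ _) hu,
        (ℓ.coord_step_of_perp hab u).symm⟩))
    · exact Or.inr (Or.inr (Or.inl ⟨(ℓ.coord_step_opp (hT _ _) hu).symm,
        (ℓ.coord_step_of_perp hab.opp_right u).symm⟩))
  · rintro (⟨ha, hb⟩ | ⟨ha, hb⟩ | ⟨hb, ha⟩ | ⟨hb, ha⟩)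
    · exact ℓ.adj_of_coord_succ hconn hT hab ha hb
    · exact (ℓ.adj_of_coord_succ hconn hT hab ha hb.symm).symm
    · exact ℓ.adj_of_coord_succ hconn hT hab.symm hb ha
    · exact (ℓ.adj_of_coord_succ hconn hT hab.symm hb ha.symm).symm

theorem exists_equiv_grid (hconn : G.Connected) (hT : ∀ a u, ℓ.Terminates a u) :
    ∃ (w h : ℕ) (φ : V ≃ Fin w × Fin h), ∀ u v, G.Adj u v ↔ GridAdj (φ u) (φ v) := by
  obtain ⟨u₀⟩ := hconn.nonempty
  have hLD : Perp L D := by decide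
  have hspan := ℓ.coord_add_coord_opp hconn hT
  refine ⟨ℓ.coord L u₀ + ℓ.coord R u₀ + 1, ℓ.coord D u₀ + ℓ.coord U u₀ + 1,
    Equiv.ofBijective (fun u => (⟨ℓ.coord L u, Nat.lt_succ_of_le ?_⟩,
      ⟨ℓ.coord D u, Nat.lt_succ_of_le ?_⟩)) ⟨?_, ?_⟩, ?_⟩
  · exact (hspan L u u₀).le.trans' (Nat.le_add_right _ _)
  · exact (hspan D u u₀).le.trans' (Nat.le_add_right _ _)
  · intro u v huv
    simp only [Prod.mk.injEq, Fin.mk.injEq] at huv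
    exact ℓ.eq_of_coord_eq hconn hT hLD huv.1 huv.2
  · rintro ⟨⟨i, hi⟩, ⟨j, hj⟩⟩
    obtain ⟨v, hvi, hvj⟩ :=
      ℓ.exists_coord_eq hconn hT hLD u₀ (Nat.lt_succ_iff.1 hi) (Nat.lt_succ_iff.1 hj)
    exact ⟨v, by simp only [hvi, hvj]⟩
  · intro u v
    simp only [GridAdj, Fin.ext_iff]
    exact ℓ.adj_iff hconn hT hLD

end GridLabeling

/-- A connected finite graph admitting a half-edge labeling from `{U,D,L,R}` satisfying the
grid constraints, with some node lacking a `D` label and some node lacking an `L` label,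
is isomorphic to an `h × w` grid graph. -/
theorem grid_recognition
    {V : Type*} [Fintype V] (G : SimpleGraph V) (hconn : G.Connected)
    (lab : V → V → GridLabel)
    (ha : ∀ u v w, G.Adj u v → G.Adj u w → v ≠ w → lab u v ≠ lab u w)
    (hb : ∀ u v, G.Adj u v → (lab u v = GridLabel.L ↔ lab v u = GridLabel.R))
    (hc : ∀ u v, G.Adj u v → (lab u v = GridLabel.U ↔ lab v u = GridLabel.D))
    (hd : ∀ u, HasLab G lab u GridLabel.R → HasLab G lab u GridLabel.U →
      ∃ a b c, G.Adj u a ∧ lab u a = GridLabel.R ∧ G.Adj a b ∧ lab a b = GridLabel.U ∧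
        G.Adj b c ∧ lab b c = GridLabel.L ∧ G.Adj c u ∧ lab c u = GridLabel.D)
    (he : ∀ u v, G.Adj u v → lab u v = GridLabel.R →
      ((HasLab G lab u GridLabel.D ↔ HasLab G lab v GridLabel.D) ∧
       (HasLab G lab u GridLabel.U ↔ HasLab G lab v GridLabel.U)))
    (hf : ∀ u v, G.Adj u v → lab u v = GridLabel.U →
      ((HasLab G lab u GridLabel.L ↔ HasLab G lab v GridLabel.L) ∧
       (HasLab G lab u GridLabel.R ↔ HasLab G lab v GridLabel.R)))
    (hnoD : ∃ u, ¬ HasLab G lab u GridLabel.D)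
    (hnoL : ∃ u, ¬ HasLab G lab u GridLabel.L) :
    ∃ (w h : ℕ) (φ : V ≃ Fin w × Fin h),
      ∀ u v, G.Adj u v ↔ GridAdj (φ u) (φ v) := by
  let ℓ : GridLabeling G := ⟨lab, ha, hb, hc, hd, he, hf⟩
  have hL : ∀ u, ℓ.Terminates L u := ℓ.terminates_of_connected hconn hnoL
  have hD : ∀ u, ℓ.Terminates D u := ℓ.terminates_of_connected hconn hnoD
  refine ℓ.exists_equiv_grid hconn fun a => ?_
  cases a
  exacts [ℓ.terminates_opp hconn hD, hD, hL, ℓ.terminates_opp hconn hL]
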